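/- Let L be a ℂ-linear operator that commutes with each involution I_j (z_j ↦ z_j^{-1}) and maps the subring P_x of ℂ[z_1^{±1},...,z_d^{±1}] generated by x_j = (z_j + z_j^{-1})/2 into the localization of ℂ[z_1^{±1},...,z_d^{±1}] at the elements 1 - z_j^2, in such a way that for every p ∈ P_x the element ∏_{j=1}^d (1 - z_j^2) · L(p) is a Laurent polynomial in ℂ[z_1^{±1},...,z_d^{±1}]. Then L(p) ∈ P_x for every p ∈ P_x, i.e., L preserves P_x. -/

import Mathlib

/-- Negation of the `j`-th coordinate, as an additive automorphism of `Fin d → ℤ`. -/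
def negAt {d : ℕ} (j : Fin d) : (Fin d → ℤ) ≃+ (Fin d → ℤ) where
  toFun v := Function.update v j (-(v j))
  invFun v := Function.update v j (-(v j))
  left_inv v := by
    ext i
    by_cases h : i = j <;> simp [Function.update_apply, h] <;> ring
  right_inv v := by
    ext i
    by_cases h : i = j <;> simp [Function.update_apply, h] <;> ring
  map_add' u v := by
    ext i
    by_cases h : i = j <;> simp [Function.update_apply, h] <;> ring

/-- The involution `I_j : z_j ↦ z_j⁻¹` of the Laurent polynomial ring
`ℂ[z₁^{±1},…,z_d^{±1}] = ℂ[Fin d → ℤ]`. -/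
noncomputable def laurentInv {d : ℕ} (j : Fin d) :
    AddMonoidAlgebra ℂ (Fin d → ℤ) ≃ₐ[ℂ] AddMonoidAlgebra ℂ (Fin d → ℤ) :=
  AddMonoidAlgebra.domCongr ℂ ℂ (negAt j)

/-- The symmetrized variable `x_j = (z_j + z_j⁻¹)/2`. -/
noncomputable def xVar {d : ℕ} (j : Fin d) : AddMonoidAlgebra ℂ (Fin d → ℤ) :=
  AddMonoidAlgebra.single (Pi.single j (1 : ℤ) : Fin d → ℤ) (2⁻¹ : ℂ) +
    AddMonoidAlgebra.single (Pi.single j (-1 : ℤ) : Fin d → ℤ) (2⁻¹ : ℂ)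

/-- The subring `P_x = ℂ[x₁,…,x_d]` of the Laurent polynomial ring. -/
noncomputable def Px (d : ℕ) : Subalgebra ℂ (AddMonoidAlgebra ℂ (Fin d → ℤ)) :=
  Algebra.adjoin ℂ (Set.range (xVar (d := d)))

/-! ### Auxiliary material -/

open Finset AddMonoidAlgebra

variable {d : ℕ}

lemma negAt_apply (j : Fin d) (a : Fin d → ℤ) :
    negAt j a = Function.update a j (-(a j)) := rfl

lemma negAt_single_self (j : Fin d) (c : ℤ) : negAt j (Pi.single j c) = Pi.single j (-c) := by
  funext i
  by_cases h : i = j <;> simp [negAt_apply, Function.update_apply, h, Pi.single_apply]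

lemma negAt_single_ne {j k : Fin d} (h : k ≠ j) (c : ℤ) :
    negAt j (Pi.single k c) = Pi.single k c := by
  funext i
  by_cases hi : i = j
  · subst hi; simp [negAt_apply, Function.update_apply, Pi.single_apply, (Ne.symm h)]
  · simp [negAt_apply, Function.update_apply, hi]

lemma laurentInv_apply (j : Fin d) (q : AddMonoidAlgebra ℂ (Fin d → ℤ)) (a : Fin d → ℤ) :
    (laurentInv j q).coeff a = q.coeff (Function.update a j (-(a j))) := by
  have : (negAt j).symm a = Function.update a j (-(a j)) := rfl
  rw [laurentInv, AddMonoidAlgebra.coeff_domCongr, this]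

lemma laurentInv_single (j : Fin d) (a : Fin d → ℤ) (c : ℂ) :
    laurentInv j (AddMonoidAlgebra.single a c) = AddMonoidAlgebra.single (negAt j a) c :=
  AddMonoidAlgebra.domCongr_single _ _ _

lemma laurentInv_xVar (j k : Fin d) : laurentInv j (xVar k) = xVar k := by
  by_cases h : k = j
  · subst h
    rw [xVar, map_add, laurentInv_single, laurentInv_single, negAt_single_self,
      negAt_single_self, neg_neg, add_comm]
  · rw [xVar, map_add, laurentInv_single, laurentInv_single, negAt_single_ne h,
      negAt_single_ne h]

lemma Px_fixed (j : Fin d) {p : AddMonoidAlgebra ℂ (Fin d → ℤ)} (hp : p ∈ Px d) :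
    laurentInv j p = p := by
  induction hp using Algebra.adjoin_induction with
  | mem x hx => obtain ⟨k, rfl⟩ := hx; exact laurentInv_xVar j k
  | algebraMap r => exact (laurentInv j).commutes r
  | add x y hx hy ihx ihy => rw [map_add, ihx, ihy]
  | mul x y hx hy ihx ihy => rw [map_mul, ihx, ihy]

/-! ### Chebyshev-type elements -/

/-- `z_j^n + z_j^{-n}`. -/
noncomputable def Bel (j : Fin d) (n : ℤ) : AddMonoidAlgebra ℂ (Fin d → ℤ) :=
  AddMonoidAlgebra.single (Pi.single j n) 1 + AddMonoidAlgebra.single (Pi.single j (-n)) 1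

/-- `z_j^n - z_j^{-n}`. -/
noncomputable def Sel (j : Fin d) (n : ℤ) : AddMonoidAlgebra ℂ (Fin d → ℤ) :=
  AddMonoidAlgebra.single (Pi.single j n) 1 - AddMonoidAlgebra.single (Pi.single j (-n)) 1

lemma Bel_mul_Bel (j : Fin d) (n : ℤ) :
    Bel j 1 * Bel j n = Bel j (n+1) + Bel j (n-1) := by
  simp only [Bel, add_mul, mul_add, AddMonoidAlgebra.single_mul_single, one_mul,
    ← Pi.single_add]
  rw [show (1:ℤ)+n = n+1 by ring, show (1:ℤ)+ -n = -(n-1) by ring,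
    show (-1:ℤ)+n = n-1 by ring, show (-1:ℤ)+ -n = -(n+1) by ring]
  abel

lemma Bel_mul_Sel (j : Fin d) (n : ℤ) :
    Bel j 1 * Sel j n = Sel j (n+1) + Sel j (n-1) := by
  simp only [Bel, Sel, add_mul, mul_sub, AddMonoidAlgebra.single_mul_single, one_mul,
    ← Pi.single_add]
  rw [show (1:ℤ)+n = n+1 by ring, show (1:ℤ)+ -n = -(n-1) by ring,
    show (-1:ℤ)+n = n-1 by ring, show (-1:ℤ)+ -n = -(n+1) by ring]
  abel

lemma Bel_zero (j : Fin d) : Bel j 0 = 1 + 1 := by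
  simp [Bel, AddMonoidAlgebra.one_def]

lemma Bel_one (j : Fin d) : Bel j 1 = (2:ℂ) • xVar j := by
  rw [xVar]
  simp only [Bel, smul_add, AddMonoidAlgebra.smul_single]
  norm_num

lemma Bel_neg (j : Fin d) (n : ℤ) : Bel j (-n) = Bel j n := by
  simp [Bel, neg_neg, add_comm]

lemma Sel_neg (j : Fin d) (n : ℤ) : Sel j (-n) = -(Sel j n) := by
  simp [Sel, neg_neg]

lemma Sel_zero (j : Fin d) : Sel j 0 = 0 := by
  simp [Sel]

lemma Bel_one_mem (j : Fin d) : Bel j 1 ∈ Px d := by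
  rw [Bel_one]
  exact Subalgebra.smul_mem _ (Algebra.subset_adjoin (Set.mem_range_self j)) _

lemma Bel_mem (j : Fin d) (n : ℤ) : Bel j n ∈ Px d := by
  have hnat : ∀ m : ℕ, Bel j (m:ℤ) ∈ Px d ∧ Bel j ((m:ℤ)+1) ∈ Px d := by
    intro m
    induction m with
    | zero =>
      constructor
      · rw [show ((0:ℕ):ℤ) = 0 by norm_num, Bel_zero]
        exact add_mem (one_mem _) (one_mem _)
      · rw [show ((0:ℕ):ℤ)+1 = 1 by norm_num]
        exact Bel_one_mem j
    | succ m ih =>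
      refine ⟨by rw [show ((m+1:ℕ):ℤ) = (m:ℤ)+1 by push_cast; ring]; exact ih.2, ?_⟩
      have hrec := Bel_mul_Bel j ((m:ℤ)+1)
      have : Bel j ((m:ℤ)+1+1) = Bel j 1 * Bel j ((m:ℤ)+1) - Bel j (m:ℤ) := by
        rw [hrec, show (m:ℤ)+1-1 = (m:ℤ) by ring]; ring
      rw [show ((m+1:ℕ):ℤ)+1 = (m:ℤ)+1+1 by push_cast; ring, this]
      exact sub_mem (mul_mem (Bel_one_mem j) ih.2) ih.1
  rcases le_or_gt 0 n with h | h
  · have := (hnat n.toNat).1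
    rwa [Int.toNat_of_nonneg h] at this
  · rw [← Bel_neg]
    have := (hnat (-n).toNat).1
    rwa [Int.toNat_of_nonneg (by omega)] at this

lemma Sel_factor (j : Fin d) (n : ℤ) : ∃ c ∈ Px d, Sel j n = Sel j 1 * c := by
  have hnat : ∀ m : ℕ, (∃ c ∈ Px d, Sel j (m:ℤ) = Sel j 1 * c) ∧
      (∃ c ∈ Px d, Sel j ((m:ℤ)+1) = Sel j 1 * c) := by
    intro m
    induction m with
    | zero =>
      refine ⟨⟨0, zero_mem _, by rw [show ((0:ℕ):ℤ) = 0 by norm_num, Sel_zero, mul_zero]⟩,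
        ⟨1, one_mem _, by rw [show ((0:ℕ):ℤ)+1 = 1 by norm_num, mul_one]⟩⟩
    | succ m ih =>
      obtain ⟨⟨c0, hc0, he0⟩, ⟨c1, hc1, he1⟩⟩ := ih
      refine ⟨⟨c1, hc1, by rw [show ((m+1:ℕ):ℤ) = (m:ℤ)+1 by push_cast; ring]; exact he1⟩,
        ⟨Bel j 1 * c1 - c0, sub_mem (mul_mem (Bel_one_mem j) hc1) hc0, ?_⟩⟩
      have hrec := Bel_mul_Sel j ((m:ℤ)+1)
      have : Sel j ((m:ℤ)+1+1) = Bel j 1 * Sel j ((m:ℤ)+1) - Sel j (m:ℤ) := by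
        rw [hrec, show (m:ℤ)+1-1 = (m:ℤ) by ring]; ring
      rw [show ((m+1:ℕ):ℤ)+1 = (m:ℤ)+1+1 by push_cast; ring, this, he0, he1]
      ring
  rcases le_or_gt 0 n with h | h
  · have := (hnat n.toNat).1
    rwa [Int.toNat_of_nonneg h] at this
  · obtain ⟨c, hc, he⟩ := (hnat (-n).toNat).1
    rw [Int.toNat_of_nonneg (by omega)] at he
    exact ⟨-c, neg_mem hc, by rw [← neg_neg n, Sel_neg, he, mul_neg]⟩

/-! ### Orbit lemmas for coefficients -/

lemma sym_orbit (q : (Fin d → ℤ) →₀ ℂ)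
    (hq : ∀ (j : Fin d) (a : Fin d → ℤ), q (Function.update a j (-(a j))) = q a)
    (v : Fin d → ℤ) :
    ∀ (u : Fin d → ℤ), (∀ j, u j = v j ∨ u j = -(v j)) → q u = q v := by
  suffices H : ∀ (n : ℕ) (u : Fin d → ℤ), (∀ j, u j = v j ∨ u j = -(v j)) →
      (Finset.univ.filter fun j => u j ≠ v j).card = n → q u = q v by
    intro u hu; exact H _ u hu rfl
  intro n
  induction n using Nat.strong_induction_on with
  | _ n ih =>
    intro u hu hcard
    by_cases huv : u = v
    · rw [huv]
    · obtain ⟨j, hj⟩ : ∃ j, u j ≠ v j := by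
        by_contra h'; push_neg at h'; exact huv (funext h')
      have hvj : u j = -(v j) := (hu j).resolve_left hj
      set u' := Function.update u j (v j) with hu'
      have h1 : u = Function.update u' j (-(u' j)) := by
        funext i
        by_cases hi : i = j
        · subst hi; simp [u', Function.update_self, hvj]
        · simp [u', Function.update_apply, hi]
      have h2 : q u = q u' := by rw [h1, hq j u']
      have hu'orb : ∀ i, u' i = v i ∨ u' i = -(v i) := by
        intro i
        by_cases hi : i = j
        · subst hi; left; simp [u']
        · simpa [u', Function.update_apply, hi] using hu i
      have hfil : (Finset.univ.filter fun i => u' i ≠ v i)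
          = (Finset.univ.filter fun i => u i ≠ v i).erase j := by
        ext i
        by_cases hi : i = j
        · subst hi; simp [u']
        · simp [Finset.mem_erase, Finset.mem_filter, u', Function.update_apply, hi]
      have hjin : j ∈ Finset.univ.filter fun i => u i ≠ v i := by simp [hj]
      have hlt : (Finset.univ.filter fun i => u' i ≠ v i).card < n := by
        rw [hfil, Finset.card_erase_of_mem hjin, hcard]
        have : 0 < n := hcard ▸ Finset.card_pos.mpr ⟨j, hjin⟩
        omega
      rw [h2, ih _ hlt u' hu'orb rfl]

lemma anti_orbit (t : (Fin d → ℤ) →₀ ℂ)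
    (ht : ∀ (j : Fin d) (a : Fin d → ℤ), t (Function.update a j (-(a j))) = -(t a))
    (v : Fin d → ℤ) :
    ∀ (u : Fin d → ℤ), (∀ j, u j = v j ∨ u j = -(v j)) →
      t u = (-1:ℂ)^((Finset.univ.filter fun j => u j ≠ v j).card) * t v := by
  suffices H : ∀ (n : ℕ) (u : Fin d → ℤ), (∀ j, u j = v j ∨ u j = -(v j)) →
      (Finset.univ.filter fun j => u j ≠ v j).card = n →
      t u = (-1:ℂ)^n * t v by
    intro u hu
    exact H _ u hu rfl
  intro n
  induction n using Nat.strong_induction_on with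
  | _ n ih =>
    intro u hu hcard
    by_cases huv : u = v
    · have : (Finset.univ.filter fun j => u j ≠ v j) = ∅ := by
        subst huv; simp
      rw [this] at hcard
      simp at hcard
      rw [huv, ← hcard, pow_zero, one_mul]
    · obtain ⟨j, hj⟩ : ∃ j, u j ≠ v j := by
        by_contra h'; push_neg at h'; exact huv (funext h')
      have hvj : u j = -(v j) := (hu j).resolve_left hj
      set u' := Function.update u j (v j) with hu'
      have h1 : u = Function.update u' j (-(u' j)) := by
        funext i
        by_cases hi : i = j
        · subst hi; simp [u', Function.update_self, hvj]
        · simp [u', Function.update_apply, hi]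
      have h2 : t u = -(t u') := by rw [h1, ht j u']
      have hu'orb : ∀ i, u' i = v i ∨ u' i = -(v i) := by
        intro i
        by_cases hi : i = j
        · subst hi; left; simp [u']
        · simpa [u', Function.update_apply, hi] using hu i
      have hfil : (Finset.univ.filter fun i => u' i ≠ v i)
          = (Finset.univ.filter fun i => u i ≠ v i).erase j := by
        ext i
        by_cases hi : i = j
        · subst hi; simp [u']
        · simp [Finset.mem_erase, Finset.mem_filter, u', Function.update_apply, hi]
      have hjin : j ∈ Finset.univ.filter fun i => u i ≠ v i := by simp [hj]
      have hpos : 0 < n := hcard ▸ Finset.card_pos.mpr ⟨j, hjin⟩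
      have hlt : (Finset.univ.filter fun i => u' i ≠ v i).card = n - 1 := by
        rw [hfil, Finset.card_erase_of_mem hjin, hcard]
      rw [h2, ih (n-1) (by omega) u' hu'orb hlt]
      have : ((-1:ℂ))^n = -((-1:ℂ))^(n-1) := by
        conv_lhs => rw [show n = (n-1)+1 by omega]
        rw [pow_succ]
        ring
      rw [this]
      ring

/-! ### Orbit-sum elements and their coefficients -/

lemma sum_pi_single_apply (s : Finset (Fin d)) (g : Fin d → ℤ) (i : Fin d) :
    (∑ j ∈ s, Pi.single j (g j)) i = if i ∈ s then g i else 0 := by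
  simp [Finset.sum_apply, Pi.single_apply, Finset.sum_ite_eq]

/-- the sign-pattern exponent -/
def sigP (v : Fin d → ℤ) (S : Finset (Fin d)) : Fin d → ℤ :=
  fun j => if j ∈ S then v j else -(v j)

/-- The sum of `z^u` over the sign-orbit of `v`. -/
noncomputable def Pprod (v : Fin d → ℤ) : AddMonoidAlgebra ℂ (Fin d → ℤ) :=
  ∏ j, (AddMonoidAlgebra.single (Pi.single j (v j)) 1 +
    if v j = 0 then 0 else AddMonoidAlgebra.single (Pi.single j (-(v j))) 1)

/-- The signed sum of `z^u` over the sign-orbit of `v`. -/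
noncomputable def Dprod (v : Fin d → ℤ) : AddMonoidAlgebra ℂ (Fin d → ℤ) :=
  ∏ j, Sel j (v j)

lemma Pprod_coeff (v u : Fin d → ℤ) :
    (Pprod v).coeff u = if (∀ j, u j = v j ∨ u j = -(v j)) then 1 else 0 := by
  classical
  rw [Pprod, Finset.prod_add]
  have hterm : ∀ S ∈ (Finset.univ : Finset (Fin d)).powerset,
      ((∏ j ∈ S, AddMonoidAlgebra.single (Pi.single j (v j)) (1:ℂ)) *
        ∏ j ∈ Finset.univ \ S,
          (if v j = 0 then 0 else AddMonoidAlgebra.single (Pi.single j (-(v j))) (1:ℂ)))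
      = if (Finset.univ.filter fun j => v j = 0) ⊆ S then
          AddMonoidAlgebra.single (sigP v S) 1 else 0 := by
    intro S _
    by_cases hZ : (Finset.univ.filter fun j => v j = 0) ⊆ S
    · rw [if_pos hZ]
      have hg : ∀ j ∈ Finset.univ \ S,
          (if v j = 0 then (0 : AddMonoidAlgebra ℂ (Fin d → ℤ))
              else AddMonoidAlgebra.single (Pi.single j (-(v j))) (1:ℂ))
            = AddMonoidAlgebra.single (Pi.single j (-(v j)) : Fin d → ℤ) (1:ℂ) := by
        intro j hj
        rw [if_neg]
        intro hvj
        exact (Finset.mem_sdiff.mp hj).2 (hZ (Finset.mem_filter.mpr ⟨Finset.mem_univ j, hvj⟩))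
      rw [Finset.prod_congr rfl hg, AddMonoidAlgebra.prod_single, AddMonoidAlgebra.prod_single,
        AddMonoidAlgebra.single_mul_single]
      congr 1
      · funext i
        rw [Pi.add_apply, sum_pi_single_apply, sum_pi_single_apply, sigP]
        by_cases hi : i ∈ S <;> simp [hi]
      · simp
    · rw [if_neg hZ]
      obtain ⟨j, hj0, hjS⟩ : ∃ j, v j = 0 ∧ j ∉ S := by
        by_contra h; push_neg at h
        exact hZ (fun j hj => h j (by simpa using hj))
      have : (∏ j ∈ Finset.univ \ S,
          (if v j = 0 then 0 else AddMonoidAlgebra.single (Pi.single j (-(v j))) (1:ℂ))) = 0 :=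
        Finset.prod_eq_zero (Finset.mem_sdiff.mpr ⟨Finset.mem_univ j, hjS⟩) (by rw [if_pos hj0])
      rw [this, mul_zero]
  rw [Finset.sum_congr rfl hterm]
  rw [AddMonoidAlgebra.coeff_sum, Finsupp.finset_sum_apply]
  by_cases horb : ∀ j, u j = v j ∨ u j = -(v j)
  · rw [if_pos horb]
    set Su : Finset (Fin d) := Finset.univ.filter (fun j => v j = 0 ∨ u j = v j) with hSu
    have hZSu : (Finset.univ.filter fun j => v j = 0) ⊆ Su := by
      intro i hi
      simp only [hSu, Finset.mem_filter, Finset.mem_univ, true_and] at hi ⊢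
      exact Or.inl hi
    have hsig : sigP v Su = u := by
      funext i
      rw [sigP]
      by_cases hi : i ∈ Su
      · simp only [hSu, Finset.mem_filter, Finset.mem_univ, true_and] at hi
        rw [if_pos (by simpa [hSu] using hi)]
        rcases hi with h0 | he
        · rcases horb i with h | h <;> rw [h, h0] <;> simp
        · exact he.symm
      · simp only [hSu, Finset.mem_filter, Finset.mem_univ, true_and, not_or] at hi
        rw [if_neg (by simpa [hSu] using hi)]
        exact ((horb i).resolve_left hi.2).symm
    rw [Finset.sum_eq_single Su]
    · rw [if_pos hZSu, hsig, AddMonoidAlgebra.coeff_single_apply, if_pos rfl]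
    · intro S hS hSne
      split_ifs with h1
      · rw [AddMonoidAlgebra.coeff_single_apply, if_neg]
        intro hsig'
        apply hSne
        ext i
        constructor
        · intro hiS
          have : u i = v i := by
            have := congrFun hsig' i
            rw [sigP, if_pos hiS] at this
            exact this.symm
          simp [hSu, this]
        · intro hiSu
          simp only [hSu, Finset.mem_filter, Finset.mem_univ, true_and] at hiSu
          by_contra hiS
          have hne : u i = -(v i) := by
            have := congrFun hsig' i
            rw [sigP, if_neg hiS] at this
            exact this.symm
          rcases hiSu with h0 | he
          · exact hiS (h1 (by simp [h0]))
          · have : v i = 0 := by rw [he] at hne; linarith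
            exact hiS (h1 (by simp [this]))
      · simp
    · intro h
      exact absurd (Finset.mem_powerset.mpr (Finset.subset_univ Su)) h
  · rw [if_neg horb]
    apply Finset.sum_eq_zero
    intro S _
    split_ifs with h1
    · rw [AddMonoidAlgebra.coeff_single_apply, if_neg]
      intro hsig'
      apply horb
      intro j
      have := congrFun hsig' j
      rw [sigP] at this
      by_cases hj : j ∈ S
      · rw [if_pos hj] at this; left; exact this.symm
      · rw [if_neg hj] at this; right; exact this.symm
    · simp

lemma Dprod_coeff (v u : Fin d → ℤ) (hv : ∀ j, v j ≠ 0) :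
    (Dprod v).coeff u = if (∀ j, u j = v j ∨ u j = -(v j)) then
      (-1:ℂ)^((Finset.univ.filter fun j => u j ≠ v j).card) else 0 := by
  classical
  have hsel : ∀ j : Fin d, Sel j (v j) = AddMonoidAlgebra.single (Pi.single j (v j)) (1:ℂ) +
      AddMonoidAlgebra.single (Pi.single j (-(v j))) (-1:ℂ) := by
    intro j
    rw [Sel, sub_eq_add_neg]
    congr 1
    rw [AddMonoidAlgebra.single_neg]
  rw [Dprod, Finset.prod_congr rfl (fun j _ => hsel j), Finset.prod_add]
  have hterm : ∀ S ∈ (Finset.univ : Finset (Fin d)).powerset,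
      ((∏ j ∈ S, AddMonoidAlgebra.single (Pi.single j (v j)) (1:ℂ)) *
        ∏ j ∈ Finset.univ \ S, AddMonoidAlgebra.single (Pi.single j (-(v j))) (-1:ℂ))
      = AddMonoidAlgebra.single (sigP v S) ((-1:ℂ)^((Finset.univ \ S).card)) := by
    intro S _
    rw [AddMonoidAlgebra.prod_single, AddMonoidAlgebra.prod_single,
      AddMonoidAlgebra.single_mul_single]
    congr 1
    · funext i
      rw [Pi.add_apply, sum_pi_single_apply, sum_pi_single_apply, sigP]
      by_cases hi : i ∈ S <;> simp [hi]
    · simp [Finset.prod_const]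
  rw [Finset.sum_congr rfl hterm, AddMonoidAlgebra.coeff_sum, Finsupp.finset_sum_apply]
  by_cases horb : ∀ j, u j = v j ∨ u j = -(v j)
  · rw [if_pos horb]
    set Su : Finset (Fin d) := Finset.univ.filter (fun j => u j = v j) with hSu
    have hsig : sigP v Su = u := by
      funext i
      rw [sigP]
      by_cases hi : i ∈ Su
      · rw [if_pos hi]
        simp only [hSu, Finset.mem_filter] at hi
        exact hi.2.symm
      · rw [if_neg hi]
        simp only [hSu, Finset.mem_filter, Finset.mem_univ, true_and] at hi
        exact ((horb i).resolve_left hi).symm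
    have hcompl : Finset.univ \ Su = Finset.univ.filter (fun j => u j ≠ v j) := by
      ext i; simp [hSu]
    rw [Finset.sum_eq_single Su]
    · rw [hsig, AddMonoidAlgebra.coeff_single_apply, if_pos rfl, hcompl]
    · intro S hS hSne
      rw [AddMonoidAlgebra.coeff_single_apply, if_neg]
      intro hsig'
      apply hSne
      ext i
      constructor
      · intro hiS
        have : u i = v i := by
          have := congrFun hsig' i
          rw [sigP, if_pos hiS] at this
          exact this.symm
        simp [hSu, this]
      · intro hiSu
        simp only [hSu, Finset.mem_filter, Finset.mem_univ, true_and] at hiSu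
        by_contra hiS
        have hne : u i = -(v i) := by
          have := congrFun hsig' i
          rw [sigP, if_neg hiS] at this
          exact this.symm
        rw [hiSu] at hne
        exact hv i (by linarith)
    · intro h
      exact absurd (Finset.mem_powerset.mpr (Finset.subset_univ Su)) h
  · rw [if_neg horb]
    apply Finset.sum_eq_zero
    intro S _
    rw [AddMonoidAlgebra.coeff_single_apply, if_neg]
    intro hsig'
    apply horb
    intro j
    have := congrFun hsig' j
    rw [sigP] at this
    by_cases hj : j ∈ S
    · rw [if_pos hj] at this; left; exact this.symm
    · rw [if_neg hj] at this; right; exact this.symm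

/-! ### Symmetry properties of the orbit sums -/

noncomputable def Delta (d : ℕ) : AddMonoidAlgebra ℂ (Fin d → ℤ) := Dprod (fun _ => (1:ℤ))

lemma laurentInv_Pprod (j : Fin d) (v : Fin d → ℤ) :
    laurentInv j (Pprod v) = Pprod v := by
  rw [Pprod, map_prod]
  apply Finset.prod_congr rfl
  intro k _
  by_cases hvk : v k = 0
  · rw [if_pos hvk, add_zero, laurentInv_single]
    have : negAt j (Pi.single k (v k)) = Pi.single k (v k) := by
      by_cases hkj : k = j
      · subst hkj; rw [negAt_single_self, hvk, neg_zero]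
      · exact negAt_single_ne hkj _
    rw [this]
  · rw [if_neg hvk, map_add, laurentInv_single, laurentInv_single]
    by_cases hkj : k = j
    · subst hkj
      rw [negAt_single_self, negAt_single_self, neg_neg, add_comm]
    · rw [negAt_single_ne hkj, negAt_single_ne hkj]

lemma laurentInv_Sel (j k : Fin d) (n : ℤ) :
    laurentInv j (Sel k n) = (if k = j then -1 else 1) * Sel k n := by
  by_cases hkj : k = j
  · subst hkj
    rw [if_pos rfl, neg_one_mul, Sel, map_sub, laurentInv_single, laurentInv_single,
      negAt_single_self, negAt_single_self, neg_neg, neg_sub]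
  · rw [if_neg hkj, one_mul, Sel, map_sub, laurentInv_single, laurentInv_single,
      negAt_single_ne hkj, negAt_single_ne hkj]

lemma laurentInv_Dprod (j : Fin d) (v : Fin d → ℤ) :
    laurentInv j (Dprod v) = -(Dprod v) := by
  rw [Dprod, map_prod]
  rw [Finset.prod_congr rfl (fun k _ => laurentInv_Sel j k (v k)), Finset.prod_mul_distrib,
    Finset.prod_ite_eq' Finset.univ j (fun _ => (-1 : AddMonoidAlgebra ℂ (Fin d → ℤ)))]
  rw [if_pos (Finset.mem_univ j), neg_one_mul]

lemma laurentInv_Delta (j : Fin d) : laurentInv j (Delta d) = -(Delta d) :=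
  laurentInv_Dprod j _

lemma Pprod_mem (v : Fin d → ℤ) : Pprod v ∈ Px d := by
  rw [Pprod]
  apply prod_mem
  intro k _
  by_cases hvk : v k = 0
  · rw [if_pos hvk, add_zero, hvk, Pi.single_zero,
      show AddMonoidAlgebra.single (0 : Fin d → ℤ) (1:ℂ) = 1 from rfl]
    exact one_mem _
  · rw [if_neg hvk]
    exact Bel_mem k (v k)

lemma Dprod_factor (v : Fin d → ℤ) : ∃ c ∈ Px d, Dprod v = Delta d * c := by
  choose c hc heq using fun j => Sel_factor j (v j)
  refine ⟨∏ j, c j, prod_mem (fun j _ => hc j), ?_⟩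
  rw [Dprod, Finset.prod_congr rfl (fun j _ => heq j), Finset.prod_mul_distrib]
  rfl

/-! ### The two main structure lemmas -/

lemma mem_Px_of_fixed (q : AddMonoidAlgebra ℂ (Fin d → ℤ))
    (hq : ∀ j, laurentInv j q = q) : q ∈ Px d := by
  suffices H : ∀ (n : ℕ) (q : AddMonoidAlgebra ℂ (Fin d → ℤ)),
      (∀ j, laurentInv j q = q) → q.coeff.support.card ≤ n → q ∈ Px d from
    H q.coeff.support.card q hq le_rfl
  intro n
  induction n with
  | zero =>
    intro q _ hc
    have : q.coeff.support = ∅ := Finset.card_eq_zero.mp (le_antisymm hc (Nat.zero_le _))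
    rw [AddMonoidAlgebra.coeff_eq_zero.mp (Finsupp.support_eq_empty.mp this)]
    exact zero_mem _
  | succ n ih =>
    intro q hq hc
    by_cases hq0 : q = 0
    · rw [hq0]; exact zero_mem _
    · obtain ⟨v, hv⟩ := Finsupp.support_nonempty_iff.mpr (mt AddMonoidAlgebra.coeff_eq_zero.mp hq0)
      have hflip : ∀ (j : Fin d) (a : Fin d → ℤ),
          q.coeff (Function.update a j (-(a j))) = q.coeff a := fun j a => by
        rw [← laurentInv_apply j q a, hq j]
      set q' := q - q.coeff v • Pprod v with hq'def
      have hcoeff : ∀ u, q'.coeff u = q.coeff u - q.coeff v * (Pprod v).coeff u := fun u => by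
        rw [hq'def, AddMonoidAlgebra.coeff_sub, Finsupp.sub_apply, AddMonoidAlgebra.coeff_smul, Finsupp.smul_apply, smul_eq_mul]
      have hsub : q'.coeff.support ⊆ q.coeff.support.erase v := by
        intro u hu
        rw [Finsupp.mem_support_iff] at hu
        by_cases horb : ∀ j, u j = v j ∨ u j = -(v j)
        · exfalso
          apply hu
          rw [hcoeff, Pprod_coeff, if_pos horb, mul_one, sym_orbit q.coeff hflip v u horb, sub_self]
        · rw [Finset.mem_erase, Finsupp.mem_support_iff]
          refine ⟨?_, ?_⟩
          · intro heq
            exact horb (heq ▸ fun j => Or.inl rfl)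
          · rw [hcoeff, Pprod_coeff, if_neg horb, mul_zero, sub_zero] at hu
            exact hu
      have hcard' : q'.coeff.support.card ≤ n := by
        have h1 := Finset.card_le_card hsub
        rw [Finset.card_erase_of_mem hv] at h1
        omega
      have hq'fix : ∀ j, laurentInv j q' = q' := by
        intro j
        rw [hq'def, map_sub, hq j, Algebra.smul_def, map_mul, AlgEquiv.commutes,
          laurentInv_Pprod, ← Algebra.smul_def]
      have hmem : q' ∈ Px d := ih q' hq'fix hcard'
      have : q = q' + q.coeff v • Pprod v := by rw [hq'def, sub_add_cancel]
      rw [this]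
      exact add_mem hmem (Subalgebra.smul_mem _ (Pprod_mem v) _)

lemma exists_anti_factor (t : AddMonoidAlgebra ℂ (Fin d → ℤ))
    (ht : ∀ j, laurentInv j t = -t) : ∃ s ∈ Px d, t = Delta d * s := by
  suffices H : ∀ (n : ℕ) (t : AddMonoidAlgebra ℂ (Fin d → ℤ)),
      (∀ j, laurentInv j t = -t) → t.coeff.support.card ≤ n → ∃ s ∈ Px d, t = Delta d * s from
    H t.coeff.support.card t ht le_rfl
  intro n
  induction n with
  | zero =>
    intro t _ hc
    have : t.coeff.support = ∅ := Finset.card_eq_zero.mp (le_antisymm hc (Nat.zero_le _))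
    rw [AddMonoidAlgebra.coeff_eq_zero.mp (Finsupp.support_eq_empty.mp this)]
    exact ⟨0, zero_mem _, (mul_zero _).symm⟩
  | succ n ih =>
    intro t ht hc
    by_cases ht0 : t = 0
    · rw [ht0]; exact ⟨0, zero_mem _, (mul_zero _).symm⟩
    · obtain ⟨v, hv⟩ := Finsupp.support_nonempty_iff.mpr (mt AddMonoidAlgebra.coeff_eq_zero.mp ht0)
      have hflip : ∀ (j : Fin d) (a : Fin d → ℤ),
          t.coeff (Function.update a j (-(a j))) = -(t.coeff a) := fun j a => by
        rw [← laurentInv_apply j t a, ht j, AddMonoidAlgebra.coeff_neg, Finsupp.neg_apply]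
      have hv0 : ∀ j, v j ≠ 0 := by
        intro j hj0
        have h1 := hflip j v
        rw [hj0, neg_zero] at h1
        rw [show Function.update v j 0 = v from by
          rw [← hj0]; exact Function.update_eq_self j v] at h1
        have h2 : (2:ℂ) * t.coeff v = 0 := by
          rw [two_mul]
          nth_rewrite 1 [h1]
          exact neg_add_cancel (t.coeff v)
        exact (Finsupp.mem_support_iff.mp hv)
          ((mul_eq_zero.mp h2).resolve_left two_ne_zero)
      set t' := t - t.coeff v • Dprod v with ht'def
      have hcoeff : ∀ u, t'.coeff u = t.coeff u - t.coeff v * (Dprod v).coeff u := fun u => by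
        rw [ht'def, AddMonoidAlgebra.coeff_sub, Finsupp.sub_apply, AddMonoidAlgebra.coeff_smul, Finsupp.smul_apply, smul_eq_mul]
      have hsub : t'.coeff.support ⊆ t.coeff.support.erase v := by
        intro u hu
        rw [Finsupp.mem_support_iff] at hu
        by_cases horb : ∀ j, u j = v j ∨ u j = -(v j)
        · exfalso
          apply hu
          rw [hcoeff, Dprod_coeff v u hv0, if_pos horb, anti_orbit t.coeff hflip v u horb]
          ring
        · rw [Finset.mem_erase, Finsupp.mem_support_iff]
          refine ⟨?_, ?_⟩
          · intro heq
            exact horb (heq ▸ fun j => Or.inl rfl)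
          · rw [hcoeff, Dprod_coeff v u hv0, if_neg horb, mul_zero, sub_zero] at hu
            exact hu
      have hcard' : t'.coeff.support.card ≤ n := by
        have h1 := Finset.card_le_card hsub
        rw [Finset.card_erase_of_mem hv] at h1
        omega
      have ht'anti : ∀ j, laurentInv j t' = -t' := by
        intro j
        rw [ht'def, map_sub, ht j, Algebra.smul_def, map_mul, AlgEquiv.commutes,
          laurentInv_Dprod, mul_neg, ← Algebra.smul_def]
        abel
      obtain ⟨s', hs', heq'⟩ := ih t' ht'anti hcard'
      obtain ⟨c, hcmem, hceq⟩ := Dprod_factor v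
      refine ⟨s' + t.coeff v • c, add_mem hs' (Subalgebra.smul_mem _ hcmem _), ?_⟩
      rw [mul_add, mul_smul_comm, ← hceq, ← heq', ht'def, sub_add_cancel]

/-! ### Nonvanishing of `Delta` -/

lemma Sel_one_ne_zero (j : Fin d) : Sel j 1 ≠ 0 := by
  intro h
  have h1 : (Sel j 1).coeff (Pi.single j 1) = 1 := by
    rw [Sel, AddMonoidAlgebra.coeff_sub, Finsupp.sub_apply, AddMonoidAlgebra.coeff_single_apply, if_pos rfl, AddMonoidAlgebra.coeff_single_apply, if_neg]
    · ring
    · intro hc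
      have := congrFun hc j
      simp at this
  rw [h] at h1
  simp at h1

lemma Delta_ne_zero : Delta d ≠ 0 := by
  rw [Delta, Dprod]
  exact Finset.prod_ne_zero_iff.mpr (fun j _ => Sel_one_ne_zero j)

lemma unit_mul :
    (∏ j : Fin d, AddMonoidAlgebra.single (Pi.single j (-1:ℤ)) (-1:ℂ)) *
      (∏ j : Fin d, ((1 : AddMonoidAlgebra ℂ (Fin d → ℤ)) -
        AddMonoidAlgebra.single (Pi.single j (2 : ℤ)) (1 : ℂ))) = Delta d := by
  rw [← Finset.prod_mul_distrib, Delta, Dprod]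
  apply Finset.prod_congr rfl
  intro j _
  rw [mul_sub, mul_one, AddMonoidAlgebra.single_mul_single, ← Pi.single_add,
    show (-1:ℤ)+2 = 1 by norm_num, Sel]
  have h1 : ∀ (a : Fin d → ℤ), AddMonoidAlgebra.single a (-1:ℂ) =
      -(AddMonoidAlgebra.single a (1:ℂ)) := fun a => by
    rw [AddMonoidAlgebra.single_neg]
  rw [show (-1:ℂ)*1 = -1 by ring, h1, h1, neg_sub_neg]

/-! ### The main theorem -/

set_option synthInstance.maxHeartbeats 1000000 in
/-- If a ℂ-linear operator `L` from the Laurent polynomial ring to its fraction field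
commutes with each involution `I_j` (extended to the fraction field as `J j`), and
`∏_j (1 - z_j²) · L(p)` is a Laurent polynomial for every `p ∈ P_x`, then `L` maps
`P_x` into `P_x`. -/
theorem operator_preserves_Px (d : ℕ)
    (J : Fin d → (FractionRing (AddMonoidAlgebra ℂ (Fin d → ℤ)) →+*
      FractionRing (AddMonoidAlgebra ℂ (Fin d → ℤ))))
    (hJ : ∀ (j : Fin d) (r : AddMonoidAlgebra ℂ (Fin d → ℤ)),
      J j (algebraMap _ _ r) = algebraMap _ _ (laurentInv j r))
    (L : AddMonoidAlgebra ℂ (Fin d → ℤ) →ₗ[ℂ] FractionRing (AddMonoidAlgebra ℂ (Fin d → ℤ)))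
    (hcomm : ∀ (j : Fin d) (p : AddMonoidAlgebra ℂ (Fin d → ℤ)), J j (L p) = L (laurentInv j p))
    (hden : ∀ p ∈ Px d, ∃ r : AddMonoidAlgebra ℂ (Fin d → ℤ),
      algebraMap _ (FractionRing (AddMonoidAlgebra ℂ (Fin d → ℤ))) r =
        algebraMap _ _ (∏ j : Fin d,
          ((1 : AddMonoidAlgebra ℂ (Fin d → ℤ)) -
            AddMonoidAlgebra.single (Pi.single j (2 : ℤ)) (1 : ℂ))) * L p) :
    ∀ p ∈ Px d, ∃ s ∈ Px d,
      algebraMap _ (FractionRing (AddMonoidAlgebra ℂ (Fin d → ℤ))) s = L p := by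
  intro p hp
  obtain ⟨r, hr⟩ := hden p hp
  set K := FractionRing (AddMonoidAlgebra ℂ (Fin d → ℤ))
  set φ := algebraMap (AddMonoidAlgebra ℂ (Fin d → ℤ)) K with hφ
  have hinj : Function.Injective φ :=
    IsFractionRing.injective (AddMonoidAlgebra ℂ (Fin d → ℤ)) K
  set U := ∏ j : Fin d, AddMonoidAlgebra.single (Pi.single j (-1:ℤ)) (-1:ℂ) with hU
  have ht0 : φ (U * r) = φ (Delta d) * L p := by
    rw [map_mul, hr, ← mul_assoc, ← map_mul, unit_mul]
  have hanti : ∀ j, laurentInv j (U * r) = -(U * r) := by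
    intro j
    apply hinj
    rw [map_neg]
    calc φ (laurentInv j (U*r)) = J j (φ (U*r)) := (hJ j (U*r)).symm
      _ = J j (φ (Delta d)) * J j (L p) := by rw [ht0, map_mul]
      _ = φ (laurentInv j (Delta d)) * L (laurentInv j p) := by rw [hJ, hcomm]
      _ = φ (-(Delta d)) * L p := by rw [laurentInv_Delta, Px_fixed j hp]
      _ = -(φ (Delta d) * L p) := by rw [map_neg]; ring
      _ = -(φ (U*r)) := by rw [ht0]
  obtain ⟨s, hs, heq⟩ := exists_anti_factor (U*r) hanti
  refine ⟨s, hs, ?_⟩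
  have hcancel : φ (Delta d) * φ s = φ (Delta d) * L p := by
    rw [← map_mul, ← heq, ht0]
  have hne : φ (Delta d) ≠ 0 := by
    intro h
    exact Delta_ne_zero (hinj (h.trans (map_zero φ).symm))
  exact mul_left_cancel₀ hne hcancel
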